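/- arXiv:0912.1332 — 4 statements merged into one kernel-verified Lean document; each statement's English description precedes it below -/
import Mathlib

section
/- Let m ≥ 1, let U ⊆ ℂ^m × ℝ be open, and let f : U → ℝ be a continuous function. Let V ⊆ ℂ^m × ℂ be an open neighborhood of the origin and let h : V → ℂ be holomorphic such that every zero of h lies in the graph of f, i.e. for all (z,w) ∈ V with h(z,w) = 0 one has (z, Re w) ∈ U and Im w = f(z, Re w). Then there exists ε > 0 such that {0} × {w ∈ ℂ : |w| < ε} ⊆ V and for every w ∈ ℂ with |w| < ε and h(0,w) = 0 one has w = 0. (In other words, the zero set of h is w-regular at the origin: its intersection with the vertical disc {z = 0, |w| < ε} is at most {0}.) -/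
/-!
If `w ↦ h (0, w)` vanished on a whole neighbourhood of `0`, that neighbourhood would contain a
vertical segment through `0` of zeros of `h`, i.e. two zeros over the same point `(0, Re w)` with
different imaginary parts; a graph cannot contain both. So `0` is an isolated zero of this
holomorphic slice.
-/

open Set Filter Topology

lemma Complex.exists_re_eq_im_ne_of_mem_nhds {s : Set ℂ} {a : ℂ} (hs : s ∈ 𝓝 a) :
    ∃ w ∈ s, w.re = a.re ∧ w.im ≠ a.im := by
  obtain ⟨ε, hε, hball⟩ := Metric.mem_nhds_iff.1 hs
  refine ⟨a + (ε / 2 : ℝ) * I, hball ?_, by simp, by simp [hε.ne']⟩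
  rw [Metric.mem_ball, dist_eq, add_sub_cancel_left, norm_mul, norm_I, mul_one, norm_real,
    Real.norm_of_nonneg (by positivity)]
  linarith

lemma DifferentiableOn.analyticAt_comp_prodMk_right {E F : Type*} [NormedAddCommGroup E]
    [NormedSpace ℂ E] [NormedAddCommGroup F] [NormedSpace ℂ F] [CompleteSpace F]
    {h : E × ℂ → F} {V : Set (E × ℂ)} {z : E} {w : ℂ} (hh : DifferentiableOn ℂ h V)
    (hV : V ∈ 𝓝 (z, w)) :
    AnalyticAt ℂ (fun w' ↦ h (z, w')) w :=
  (hh.comp ((differentiableOn_const z).prodMk differentiableOn_id)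
    (mapsTo_preimage _ V)).analyticAt
    ((Continuous.prodMk_right z).continuousAt.preimage_mem_nhds hV)

lemma AnalyticAt.eventually_ne_zero_of_zeros_im_eq {E : Type*} [NormedAddCommGroup E]
    [NormedSpace ℂ E] {g : ℂ → E} {a : ℂ} (hg : AnalyticAt ℂ g a) (φ : ℝ → ℝ)
    (hgraph : ∀ᶠ w in 𝓝 a, g w = 0 → w.im = φ w.re) :
    ∀ᶠ w in 𝓝[≠] a, g w ≠ 0 := by
  refine hg.eventually_eq_zero_or_eventually_ne_zero.resolve_left fun hzero ↦ ?_
  have hzeros : ∀ᶠ w in 𝓝 a, w.im = φ w.re := (hzero.and hgraph).mono fun w hw ↦ hw.2 hw.1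
  obtain ⟨w, hw, hre, him⟩ := Complex.exists_re_eq_im_ne_of_mem_nhds hzeros
  exact him (by rw [show w.im = φ w.re from hw, hzeros.self_of_nhds, hre])

theorem zero_set_in_graph_w_regular_general
    (m : ℕ)
    (U : Set ((Fin m → ℂ) × ℝ))
    (f : (Fin m → ℂ) × ℝ → ℝ)
    (V : Set ((Fin m → ℂ) × ℂ)) (hVopen : IsOpen V)
    (h0V : (0 : (Fin m → ℂ) × ℂ) ∈ V)
    (h : (Fin m → ℂ) × ℂ → ℂ) (hh : DifferentiableOn ℂ h V)
    (hgraph : ∀ p ∈ V, h p = 0 → (p.1, p.2.re) ∈ U ∧ p.2.im = f (p.1, p.2.re)) :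
    ∃ ε : ℝ, 0 < ε ∧
      ({(0 : Fin m → ℂ)} ×ˢ {w : ℂ | ‖w‖ < ε}) ⊆ V ∧
      ∀ w : ℂ, ‖w‖ < ε → h (0, w) = 0 → w = 0 := by
  have hV : V ∈ 𝓝 ((0 : Fin m → ℂ), (0 : ℂ)) := hVopen.mem_nhds h0V
  have hslice : ∀ᶠ w in 𝓝 (0 : ℂ), ((0 : Fin m → ℂ), w) ∈ V :=
    (Continuous.prodMk_right 0).continuousAt.preimage_mem_nhds hV
  have hisolated : ∀ᶠ w in 𝓝[≠] (0 : ℂ), h (0, w) ≠ 0 :=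
    (hh.analyticAt_comp_prodMk_right hV).eventually_ne_zero_of_zeros_im_eq (fun u ↦ f (0, u))
      (hslice.mono fun w hw hw0 ↦ (hgraph _ hw hw0).2)
  obtain ⟨ε, hε, hball⟩ := Metric.eventually_nhds_iff.1 <|
    hslice.and <| (eventually_nhdsWithin_iff.1 hisolated).mono fun w hw hw0 ↦
      by_contra fun hne ↦ hw hne hw0
  simp only [dist_zero_right] at hball
  refine ⟨ε, hε, ?_, fun w hw ↦ (hball hw).2⟩
  rintro ⟨z, w⟩ ⟨rfl, hw⟩
  exact (hball hw).1

/-- First step in the proof of Lemma 3.5: the zero set of `h` is `w`-regular at the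
origin, i.e. its intersection with a small vertical disc `{z = 0, |w| < ε}` is
contained in `{0}`. -/
theorem zero_set_in_graph_w_regular
    (m : ℕ) (hm : 1 ≤ m)
    (U : Set ((Fin m → ℂ) × ℝ)) (hUopen : IsOpen U)
    (f : (Fin m → ℂ) × ℝ → ℝ) (hf : ContinuousOn f U)
    (V : Set ((Fin m → ℂ) × ℂ)) (hVopen : IsOpen V)
    (h0V : (0 : (Fin m → ℂ) × ℂ) ∈ V)
    (h : (Fin m → ℂ) × ℂ → ℂ) (hh : DifferentiableOn ℂ h V)
    (hgraph : ∀ p ∈ V, h p = 0 → (p.1, p.2.re) ∈ U ∧ p.2.im = f (p.1, p.2.re)) :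
    ∃ ε : ℝ, 0 < ε ∧
      ({(0 : Fin m → ℂ)} ×ˢ {w : ℂ | ‖w‖ < ε}) ⊆ V ∧
      ∀ w : ℂ, ‖w‖ < ε → h (0, w) = 0 → w = 0 :=
  zero_set_in_graph_w_regular_general m U f V hVopen h0V h hh hgraph
end

section
/- Let m ≥ 1, let D ⊆ ℂ^m be a nonempty open connected set, and let τ₁, τ₂ : D → ℂ be holomorphic. Let f : ℂ^m × ℝ → ℝ be any function such that for j = 1, 2 and all z ∈ D one has Im τⱼ(z) = f(z, Re τⱼ(z)) (i.e. the graphs of τ₁ and τ₂ are both contained in the graph of f over ℂ^m × ℝ). If there exists z₀ ∈ D with τ₁(z₀) = τ₂(z₀), then τ₁ = τ₂ on all of D. -/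
/-!
Put `g = τ₁ - τ₂`. Where `Re g = 0` the two sheets lie over the same point `(z, Re τⱼ z)`, so their
imaginary parts are both read off from `f` and `g = 0`. By the open mapping theorem a holomorphic
function of one variable that vanishes somewhere and is not identically zero takes all small values
near that point, in particular nonzero purely imaginary ones, so on each complex line through a zero
of `g` it vanishes identically. Hence the zero set of `g` is open in `D`; it is also closed in `D`,
and `D` is connected.
-/

open Set Filter Topology Metric

namespace Complex

theorem exists_mem_ne_zero_re_eq_zero_of_mem_nhds_zero {s : Set ℂ} (hs : s ∈ 𝓝 0) :
    ∃ w ∈ s, w ≠ 0 ∧ w.re = 0 := by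
  have hline : Tendsto (fun t : ℝ => (t : ℂ) * I) (𝓝[≠] 0) (𝓝 0) := by
    simpa using (Continuous.tendsto (f := fun t : ℝ => (t : ℂ) * I) (by fun_prop) 0).mono_left
      nhdsWithin_le_nhds
  obtain ⟨t, hts, ht⟩ := ((hline.eventually_mem hs).and self_mem_nhdsWithin).exists
  exact ⟨t * I, hts, by simpa using ht, by simp⟩

end Complex

section

variable {E : Type*} [NormedAddCommGroup E] [NormedSpace ℂ E] {U : Set E} {g : E → ℂ}

theorem AnalyticOnNhd.eqOn_zero_of_re_eq_zero_imp_eq_zero (hg : AnalyticOnNhd ℂ g U)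
    (hUo : IsOpen U) (hUc : IsPreconnected U) (hre : ∀ z ∈ U, (g z).re = 0 → g z = 0)
    {z₀ : E} (hz₀ : z₀ ∈ U) (hg₀ : g z₀ = 0) : EqOn g 0 U := by
  rcases hg.is_constant_or_isOpen hUc with ⟨w, hw⟩ | hopen
  · intro z hz
    rw [hw z hz, ← hw z₀ hz₀, hg₀, Pi.zero_apply]
  · obtain ⟨_, ⟨z, hz, rfl⟩, hne, hre₀⟩ := Complex.exists_mem_ne_zero_re_eq_zero_of_mem_nhds_zero
      ((hopen U subset_rfl hUo).mem_nhds ⟨z₀, hz₀, hg₀⟩)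
    exact absurd (hre z hz hre₀) hne

theorem DifferentiableOn.isOpen_inter_preimage_zero_of_re_eq_zero_imp_eq_zero
    (hg : DifferentiableOn ℂ g U) (hUo : IsOpen U) (hre : ∀ z ∈ U, (g z).re = 0 → g z = 0) :
    IsOpen (U ∩ g ⁻¹' {0}) := by
  rw [Metric.isOpen_iff]
  rintro a ⟨ha, hga⟩
  obtain ⟨r, hr, hrU⟩ := Metric.isOpen_iff.mp hUo a ha
  refine ⟨r, hr, fun b hb => ⟨hrU hb, ?_⟩⟩
  set v := b - a
  -- `L ⁻¹' ball 0 r` is the convex set of parameters `t` with `a + t • v ∈ ball a r`.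
  let L : ℂ →ₗ[ℝ] E := (LinearMap.toSpanSingleton ℂ E v).restrictScalars ℝ
  have hline : ∀ t ∈ L ⁻¹' ball 0 r, a + t • v ∈ U := fun t ht =>
    hrU (by simpa [mem_ball_iff_norm, L] using ht)
  have hopen : IsOpen (L ⁻¹' ball 0 r) := isOpen_ball.preimage L.continuous_of_finiteDimensional
  have hzero := AnalyticOnNhd.eqOn_zero_of_re_eq_zero_imp_eq_zero (g := fun t : ℂ => g (a + t • v))
    ((hg.comp (by fun_prop) hline).analyticOnNhd hopen) hopen
    ((convex_ball 0 r).linear_preimage L).isPreconnected (fun t ht => hre _ (hline t ht))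
    (z₀ := 0) (by simpa [L] using hr) (by simpa using hga)
    (show (1 : ℂ) ∈ L ⁻¹' ball 0 r by simpa [L, v, mem_ball, dist_eq_norm] using hb)
  simpa [v] using hzero

theorem DifferentiableOn.eqOn_zero_of_re_eq_zero_imp_eq_zero (hg : DifferentiableOn ℂ g U)
    (hUo : IsOpen U) (hUc : IsPreconnected U) (hre : ∀ z ∈ U, (g z).re = 0 → g z = 0)
    {z₀ : E} (hz₀ : z₀ ∈ U) (hg₀ : g z₀ = 0) : EqOn g 0 U := fun _ hz =>
  hUc.subset_left_of_subset_union
    (hg.isOpen_inter_preimage_zero_of_re_eq_zero_imp_eq_zero hUo hre)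
    (hg.continuousOn.isOpen_inter_preimage hUo isOpen_compl_singleton)
    (disjoint_left.mpr fun _ h₀ h₁ => h₁.2 h₀.2)
    (fun x hx => (em (g x = 0)).imp (⟨hx, ·⟩) (⟨hx, ·⟩)) ⟨z₀, hz₀, hz₀, hg₀⟩ hz |>.2

end

theorem holomorphic_sections_of_graph_coincide_general
    (m : ℕ)
    (D : Set (Fin m → ℂ)) (hDopen : IsOpen D) (hDconn : IsConnected D)
    (τ₁ τ₂ : (Fin m → ℂ) → ℂ)
    (hτ₁ : DifferentiableOn ℂ τ₁ D) (hτ₂ : DifferentiableOn ℂ τ₂ D)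
    (f : (Fin m → ℂ) × ℝ → ℝ)
    (hf₁ : ∀ z ∈ D, (τ₁ z).im = f (z, (τ₁ z).re))
    (hf₂ : ∀ z ∈ D, (τ₂ z).im = f (z, (τ₂ z).re))
    (z₀ : Fin m → ℂ) (hz₀ : z₀ ∈ D) (heq : τ₁ z₀ = τ₂ z₀) :
    Set.EqOn τ₁ τ₂ D := by
  have hre : ∀ z ∈ D, (τ₁ z - τ₂ z).re = 0 → τ₁ z - τ₂ z = 0 := by
    intro z hz h
    have hre_eq : (τ₁ z).re = (τ₂ z).re := sub_eq_zero.mp (by simpa using h)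
    rw [sub_eq_zero]
    exact Complex.ext hre_eq (by rw [hf₁ z hz, hf₂ z hz, hre_eq])
  intro z hz
  exact sub_eq_zero.mp <| (hτ₁.sub hτ₂).eqOn_zero_of_re_eq_zero_imp_eq_zero hDopen
    hDconn.isPreconnected hre hz₀ (sub_eq_zero.mpr heq) hz

/-- Final step in the proof of Lemma 3.5: two holomorphic functions on a connected open
set whose graphs are both contained in the graph of a real function `f` over `ℂ^m × ℝ`
and which agree at one point agree everywhere. -/
theorem holomorphic_sections_of_graph_coincide
    (m : ℕ) (hm : 1 ≤ m)
    (D : Set (Fin m → ℂ)) (hDopen : IsOpen D) (hDconn : IsConnected D)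
    (τ₁ τ₂ : (Fin m → ℂ) → ℂ)
    (hτ₁ : DifferentiableOn ℂ τ₁ D) (hτ₂ : DifferentiableOn ℂ τ₂ D)
    (f : (Fin m → ℂ) × ℝ → ℝ)
    (hf₁ : ∀ z ∈ D, (τ₁ z).im = f (z, (τ₁ z).re))
    (hf₂ : ∀ z ∈ D, (τ₂ z).im = f (z, (τ₂ z).re))
    (z₀ : Fin m → ℂ) (hz₀ : z₀ ∈ D) (heq : τ₁ z₀ = τ₂ z₀) :
    Set.EqOn τ₁ τ₂ D :=
  holomorphic_sections_of_graph_coincide_general m D hDopen hDconn τ₁ τ₂ hτ₁ hτ₂ f hf₁ hf₂ z₀ hz₀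
    heq
end

section
/- Let F be a finite-dimensional real normed vector space, let K ⊆ F be a compact convex set, and let W ⊆ F be a linear subspace. Let q̄ be a point of the interior of K and let (q_j) be a sequence in F converging to q̄. Then the sections K ∩ (q_j + W) converge to K ∩ (q̄ + W) in the Hausdorff distance, i.e. hausdorffDist(K ∩ (q_j + W), K ∩ (q̄ + W)) → 0 as j → ∞. -/
/-!
If `K` is convex and `p = a + t⁻¹ (b - a) ∈ K`, the homothety `y ↦ b + (1 - t)(y - a)` maps the
slice `K ∩ (a + W)` into `K ∩ (b + W)`, since it sends `y` to the convex combination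
`(1 - t) y + t p`; it moves each point by at most `t · diam K + ‖b - a‖`. If `ball c r ⊆ K` and
`‖b - c‖ < t r`, both `c + t⁻¹ (b - c)` and `b + t⁻¹ (c - b)` lie in that ball, so this works in
both directions and the slices through `b` and `c` are within Hausdorff distance `t (diam K + r)`;
as `b → c` any `t > 0` is eventually admissible.
-/

open Pointwise Metric

section Slices

variable {F : Type*} [NormedAddCommGroup F] [NormedSpace ℝ F] {K : Set F} (W : Submodule ℝ F)

theorem add_smul_sub_mem_vadd_submodule {a b y : F} (hy : y ∈ a +ᵥ (W : Set F)) (s : ℝ) :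
    b + s • (y - a) ∈ b +ᵥ (W : Set F) := by
  obtain ⟨w, hw, rfl⟩ := hy
  exact ⟨s • w, W.smul_mem s hw, by simp⟩

theorem Convex.add_one_sub_smul_sub_mem (hK : Convex ℝ K) {a b y : F} {t : ℝ} (ht0 : 0 < t)
    (ht1 : t ≤ 1) (hy : y ∈ K) (hp : a + t⁻¹ • (b - a) ∈ K) :
    b + (1 - t) • (y - a) ∈ K := by
  have hcomb : b + (1 - t) • (y - a) = (1 - t) • y + t • (a + t⁻¹ • (b - a)) := by
    rw [smul_add, smul_smul, mul_inv_cancel₀ ht0.ne', one_smul]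
    module
  rw [hcomb]
  exact hK hy hp (by linarith) ht0.le (by ring)

theorem Convex.infDist_inter_vadd_le (hK : Convex ℝ K) {a b y : F} {t : ℝ} (ht0 : 0 < t)
    (ht1 : t ≤ 1) (hp : a + t⁻¹ • (b - a) ∈ K) (hy : y ∈ K ∩ (a +ᵥ (W : Set F))) :
    infDist y (K ∩ (b +ᵥ (W : Set F))) ≤ t * ‖y - a‖ + ‖b - a‖ := by
  have hz : b + (1 - t) • (y - a) ∈ K ∩ (b +ᵥ (W : Set F)) :=
    ⟨hK.add_one_sub_smul_sub_mem ht0 ht1 hy.1 hp, add_smul_sub_mem_vadd_submodule W hy.2 _⟩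
  calc infDist y (K ∩ (b +ᵥ (W : Set F)))
      ≤ ‖y - (b + (1 - t) • (y - a))‖ := by
        rw [← dist_eq_norm]
        exact infDist_le_dist_of_mem hz
    _ = ‖t • (y - a) - (b - a)‖ := by congr 1; module
    _ ≤ ‖t • (y - a)‖ + ‖b - a‖ := norm_sub_le _ _
    _ = t * ‖y - a‖ + ‖b - a‖ := by rw [norm_smul, Real.norm_of_nonneg ht0.le]

theorem Convex.hausdorffDist_inter_vadd_le (hK : Convex ℝ K) (hKb : Bornology.IsBounded K)
    {a b : F} (ha : a ∈ K) (hb : b ∈ K) {t : ℝ} (ht0 : 0 < t) (ht1 : t ≤ 1)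
    (hpa : a + t⁻¹ • (b - a) ∈ K) (hpb : b + t⁻¹ • (a - b) ∈ K) :
    hausdorffDist (K ∩ (a +ᵥ (W : Set F))) (K ∩ (b +ᵥ (W : Set F))) ≤ t * diam K + ‖b - a‖ := by
  have hdiam {x y : F} (hx : x ∈ K) (hy : y ∈ K) : t * ‖x - y‖ ≤ t * diam K := by
    rw [← dist_eq_norm]
    exact mul_le_mul_of_nonneg_left (dist_le_diam_of_mem hKb hx hy) ht0.le
  refine hausdorffDist_le_of_infDist (by positivity) (fun y hy => ?_) (fun y hy => ?_)
  · linarith [hK.infDist_inter_vadd_le W ht0 ht1 hpa hy, hdiam hy.1 ha]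
  · linarith [hK.infDist_inter_vadd_le W ht0 ht1 hpb hy, hdiam hy.1 hb, norm_sub_rev a b]

theorem add_smul_mem_ball {c v : F} {r s t : ℝ} (ht0 : 0 < t) (hs : |s| ≤ t⁻¹)
    (hv : ‖v‖ < t * r) : c + s • v ∈ ball c r := by
  rw [mem_ball, dist_eq_norm, add_sub_cancel_left, norm_smul, Real.norm_eq_abs]
  calc |s| * ‖v‖ ≤ t⁻¹ * ‖v‖ := mul_le_mul_of_nonneg_right hs (norm_nonneg v)
    _ < t⁻¹ * (t * r) := mul_lt_mul_of_pos_left hv (inv_pos.mpr ht0)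
    _ = r := by field_simp

theorem Convex.hausdorffDist_inter_vadd_le_of_ball_subset (hK : Convex ℝ K)
    (hKb : Bornology.IsBounded K) {c b : F} {r t : ℝ} (hball : ball c r ⊆ K) (ht0 : 0 < t)
    (ht1 : t ≤ 1) (hb : b ∈ ball c (t * r)) :
    hausdorffDist (K ∩ (b +ᵥ (W : Set F))) (K ∩ (c +ᵥ (W : Set F))) ≤ t * (diam K + r) := by
  have hr : 0 < r := pos_of_mul_pos_right (pos_of_mem_ball hb) ht0.le
  have hv : ‖b - c‖ < t * r := by rwa [mem_ball, dist_eq_norm] at hb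
  have hinv : 1 ≤ t⁻¹ := (one_le_inv₀ ht0).mpr ht1
  have hpb : b + t⁻¹ • (c - b) ∈ K := by
    have hs : |1 - t⁻¹| ≤ t⁻¹ := abs_le.mpr ⟨by linarith, by linarith⟩
    convert hball (add_smul_mem_ball ht0 hs hv) using 1
    module
  have hpc : c + t⁻¹ • (b - c) ∈ K :=
    hball (add_smul_mem_ball ht0 (abs_of_pos (inv_pos.mpr ht0)).le hv)
  have hbK : b ∈ K := hball (ball_subset_ball (by nlinarith) hb)
  calc _ ≤ t * diam K + ‖c - b‖ := hK.hausdorffDist_inter_vadd_le W hKb hbK (hball (mem_ball_self hr))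
          ht0 ht1 hpb hpc
    _ ≤ t * (diam K + r) := by rw [norm_sub_rev]; linarith

end Slices

theorem hausdorff_convergence_of_convex_sections_general
    {F : Type*} [NormedAddCommGroup F] [NormedSpace ℝ F]
    (K : Set F) (hKcomp : IsCompact K) (hKconv : Convex ℝ K)
    (W : Submodule ℝ F)
    (qbar : F) (hqbar : qbar ∈ interior K)
    (q : ℕ → F) (hq : Filter.Tendsto q Filter.atTop (nhds qbar)) :
    Filter.Tendsto
      (fun j => Metric.hausdorffDist (K ∩ (q j +ᵥ (W : Set F))) (K ∩ (qbar +ᵥ (W : Set F))))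
      Filter.atTop (nhds 0) := by
  obtain ⟨r, hr, hball⟩ := Metric.isOpen_iff.mp isOpen_interior qbar hqbar
  rw [Metric.tendsto_nhds]
  intro ε hε
  obtain ⟨c, hc0, hcε⟩ := exists_pos_mul_lt hε (diam K + r)
  have hC : 0 ≤ diam K + r := add_nonneg diam_nonneg hr.le
  set t := min 1 c
  have ht0 : 0 < t := lt_min one_pos hc0
  have htε : t * (diam K + r) < ε := by
    rw [mul_comm]
    exact (mul_le_mul_of_nonneg_left (min_le_right 1 c) hC).trans_lt hcε
  filter_upwards [hq.eventually (ball_mem_nhds qbar (mul_pos ht0 hr))] with j hj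
  rw [Real.dist_0_eq_abs, abs_of_nonneg hausdorffDist_nonneg]
  exact (hKconv.hausdorffDist_inter_vadd_le_of_ball_subset W hKcomp.isBounded
    (hball.trans interior_subset) ht0 (min_le_left 1 c) hj).trans_lt htε

/-- Slices of a compact convex body by translated affine subspaces through points
converging to an interior point converge in the Hausdorff distance. -/
theorem hausdorff_convergence_of_convex_sections
    {F : Type*} [NormedAddCommGroup F] [NormedSpace ℝ F] [FiniteDimensional ℝ F]
    (K : Set F) (hKcomp : IsCompact K) (hKconv : Convex ℝ K)
    (W : Submodule ℝ F)
    (qbar : F) (hqbar : qbar ∈ interior K)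
    (q : ℕ → F) (hq : Filter.Tendsto q Filter.atTop (nhds qbar)) :
    Filter.Tendsto
      (fun j => Metric.hausdorffDist (K ∩ (q j +ᵥ (W : Set F))) (K ∩ (qbar +ᵥ (W : Set F))))
      Filter.atTop (nhds 0) :=
  hausdorff_convergence_of_convex_sections_general K hKcomp hKconv W qbar hqbar q hq
end

section
/- Let m ≥ 1 and let Ω ⊆ ℂ^m × ℝ be a bounded open convex set whose closure is strictly convex. Let g : frontier Ω → ℝ be a continuous function, let a ∈ ℂ^m be nonzero, and let W = {(λa, t) : λ ∈ ℂ, t ∈ ℝ} ⊆ ℂ^m × ℝ. For q ∈ Ω define S_q = {(z, u + i·g(z,u)) ∈ ℂ^m × ℂ : (z,u) ∈ frontier Ω ∩ (q + W)}, the portion of the graph of g lying over the slice of the boundary of Ω by the affine subspace q + W. Then for every sequence (q_j) of points of Ω converging to a point q̄ ∈ Ω, the sets S_{q_j} converge to S_{q̄} in the Hausdorff distance, i.e. hausdorffDist(S_{q_j}, S_{q̄}) → 0 as j → ∞. -/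
/-!
Seen from an interior point `q`, each boundary point of the bounded convex open set `Ω` is the
exit point `q + w / gauge (Ω - q) w` of a unique ray, and this exit point depends continuously on
`(q, w)` for `w ≠ 0`, since `gauge (Ω - q) w < c` and `gauge (Ω - q) w > c` are open conditions
on `(q, w)`. Hence `S q` is the image of the compact set of unit vectors of `W` under a map that
is jointly continuous in `(q, w)`, and uniform continuity on this compact set gives Hausdorff
convergence.
-/

open Filter Metric Topology Pointwise Set

lemma preimage_add_left_mem_nhds_zero {G : Type*} [AddGroup G] [TopologicalSpace G]
    [ContinuousAdd G] {Ω : Set G} {q : G} (hΩ : IsOpen Ω) (hq : q ∈ Ω) :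
    (q + ·) ⁻¹' Ω ∈ 𝓝 (0 : G) :=
  (continuous_const_add q).continuousAt.preimage_mem_nhds (by simpa using hΩ.mem_nhds hq)

section RadialProjection

variable {E : Type*} [NormedAddCommGroup E] [NormedSpace ℝ E] {Ω : Set E} {q w : E}

lemma gauge_preimage_add_left_lt_iff (hΩ : IsOpen Ω) (hΩc : Convex ℝ Ω) (hq : q ∈ Ω)
    {c : ℝ} (hc : 0 < c) : gauge ((q + ·) ⁻¹' Ω) w < c ↔ q + c⁻¹ • w ∈ Ω := by
  rw [← mul_lt_mul_iff_right₀ (inv_pos.2 hc), inv_mul_cancel₀ hc.ne', ← smul_eq_mul,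
    ← gauge_smul_of_nonneg (inv_nonneg.2 hc.le),
    gauge_lt_one_iff_mem_interior (hΩc.translate_preimage_right q)
      (preimage_add_left_mem_nhds_zero hΩ hq),
    (hΩ.preimage (continuous_const_add q)).interior_eq, mem_preimage]

lemma gauge_preimage_add_left_le_iff (hΩ : IsOpen Ω) (hΩc : Convex ℝ Ω) (hq : q ∈ Ω)
    {c : ℝ} (hc : 0 < c) : gauge ((q + ·) ⁻¹' Ω) w ≤ c ↔ q + c⁻¹ • w ∈ closure Ω := by
  rw [← mul_le_mul_iff_right₀ (inv_pos.2 hc), inv_mul_cancel₀ hc.ne', ← smul_eq_mul,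
    ← gauge_smul_of_nonneg (inv_nonneg.2 hc.le),
    gauge_le_one_iff_mem_closure (hΩc.translate_preimage_right q)
      (preimage_add_left_mem_nhds_zero hΩ hq)]
  exact (Set.ext_iff.1 ((Homeomorph.addLeft q).preimage_closure Ω) _).symm

lemma gauge_preimage_add_left_eq_one_iff (hΩ : IsOpen Ω) (hΩc : Convex ℝ Ω) (hq : q ∈ Ω) :
    gauge ((q + ·) ⁻¹' Ω) w = 1 ↔ q + w ∈ frontier Ω := by
  rw [gauge_eq_one_iff_mem_frontier (hΩc.translate_preimage_right q)
      (preimage_add_left_mem_nhds_zero hΩ hq)]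
  exact (Set.ext_iff.1 ((Homeomorph.addLeft q).preimage_frontier Ω) _).symm

lemma gauge_preimage_add_left_pos (hΩ : IsOpen Ω) (hΩb : Bornology.IsBounded Ω) (hq : q ∈ Ω)
    (hw : w ≠ 0) : 0 < gauge ((q + ·) ⁻¹' Ω) w :=
  (gauge_pos (absorbent_nhds_zero (preimage_add_left_mem_nhds_zero hΩ hq))
    (NormedSpace.isVonNBounded_iff ℝ |>.2
      ((IsometryEquiv.addLeft q).isometry.antilipschitz.isBounded_preimage hΩb))).2 hw

lemma continuousAt_gauge_preimage_add_left (hΩ : IsOpen Ω) (hΩc : Convex ℝ Ω) (hq : q ∈ Ω)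
    (w : E) : ContinuousAt (fun p : E × E => gauge ((p.1 + ·) ⁻¹' Ω) p.2) (q, w) := by
  have hmem : ∀ᶠ p : E × E in 𝓝 (q, w), p.1 ∈ Ω :=
    continuousAt_fst.preimage_mem_nhds (hΩ.mem_nhds hq)
  have hray (c : ℝ) : Continuous fun p : E × E => p.1 + c • p.2 := by fun_prop
  refine tendsto_order.2 ⟨fun c hc => ?_, fun c hc => ?_⟩
  · rcases lt_or_ge c 0 with hc0 | hc0
    · exact .of_forall fun p => hc0.trans_le (gauge_nonneg _)
    obtain ⟨c', hcc', hc'⟩ := exists_between hc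
    have hout : q + c'⁻¹ • w ∉ closure Ω := by
      rwa [← gauge_preimage_add_left_le_iff hΩ hΩc hq (hc0.trans_lt hcc'), not_le]
    filter_upwards [hmem, (hray c'⁻¹).continuousAt.preimage_mem_nhds
      (isClosed_closure.isOpen_compl.mem_nhds hout)] with p hp hpout
    exact hcc'.trans (not_le.1 fun h =>
      hpout ((gauge_preimage_add_left_le_iff hΩ hΩc hp (hc0.trans_lt hcc')).1 h))
  · obtain ⟨c', hc', hcc'⟩ := exists_between hc
    have hc'0 : 0 < c' := (gauge_nonneg _).trans_lt hc'
    have hin : q + c'⁻¹ • w ∈ Ω := (gauge_preimage_add_left_lt_iff hΩ hΩc hq hc'0).1 hc'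
    filter_upwards [hmem, (hray c'⁻¹).continuousAt.preimage_mem_nhds (hΩ.mem_nhds hin)]
      with p hp hpin
    exact ((gauge_preimage_add_left_lt_iff hΩ hΩc hp hc'0).2 hpin).trans hcc'

/-- The point where the ray from `q` in direction `w` leaves `Ω`, when `Ω` is a bounded open
convex neighbourhood of `q`. -/
noncomputable def radialProj (Ω : Set E) (q w : E) : E :=
  q + (gauge ((q + ·) ⁻¹' Ω) w)⁻¹ • w

lemma radialProj_smul_of_pos {c : ℝ} (hc : 0 < c) :
    radialProj Ω q (c • w) = radialProj Ω q w := by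
  rcases eq_or_ne (gauge ((q + ·) ⁻¹' Ω) w) 0 with h | h
  · simp [radialProj, gauge_smul_of_nonneg hc.le, h]
  · simp only [radialProj, gauge_smul_of_nonneg hc.le, smul_eq_mul, smul_smul, mul_inv_rev,
      inv_mul_cancel_right₀ hc.ne']

variable (hΩ : IsOpen Ω) (hΩc : Convex ℝ Ω)
include hΩ hΩc

lemma radialProj_of_mem_frontier (hq : q ∈ Ω) {z : E} (hz : z ∈ frontier Ω) :
    radialProj Ω q (z - q) = z := by
  have : gauge ((q + ·) ⁻¹' Ω) (z - q) = 1 :=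
    (gauge_preimage_add_left_eq_one_iff hΩ hΩc hq).2 (by rwa [add_sub_cancel])
  simp [radialProj, this]

variable (hΩb : Bornology.IsBounded Ω)
include hΩb

lemma radialProj_mem_frontier (hq : q ∈ Ω) (hw : w ≠ 0) : radialProj Ω q w ∈ frontier Ω := by
  rw [radialProj, ← gauge_preimage_add_left_eq_one_iff hΩ hΩc hq,
    gauge_smul_of_nonneg (inv_nonneg.2 (gauge_nonneg _)), smul_eq_mul,
    inv_mul_cancel₀ (gauge_preimage_add_left_pos hΩ hΩb hq hw).ne']

lemma continuousOn_radialProj :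
    ContinuousOn (fun p : E × E => radialProj Ω p.1 p.2) (Ω ×ˢ {0}ᶜ) := by
  refine (hΩ.prod isOpen_compl_singleton).continuousOn_iff.2 fun ⟨q, w⟩ ⟨hq, hw⟩ => ?_
  exact continuousAt_fst.add
    (((continuousAt_gauge_preimage_add_left hΩ hΩc hq w).inv₀
      (gauge_preimage_add_left_pos hΩ hΩb hq hw).ne').smul continuousAt_snd)

lemma frontier_inter_vadd_submodule_eq_image_radialProj (V : Submodule ℝ E) (hq : q ∈ Ω) :
    frontier Ω ∩ (q +ᵥ (V : Set E)) = radialProj Ω q '' (V ∩ sphere 0 1) := by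
  ext z
  simp only [mem_inter_iff, mem_vadd_set_iff_neg_vadd_mem, vadd_eq_add, neg_add_eq_sub,
    SetLike.mem_coe, mem_image, mem_sphere_zero_iff_norm]
  constructor
  · rintro ⟨hz, hzV⟩
    have hzq : z - q ≠ 0 := sub_ne_zero.2 fun h => (hΩ.frontier_eq ▸ hz).2 (h ▸ hq)
    refine ⟨‖z - q‖⁻¹ • (z - q), ⟨V.smul_mem _ hzV, ?_⟩, ?_⟩
    · rw [norm_smul, norm_inv, norm_norm, inv_mul_cancel₀ (norm_ne_zero_iff.2 hzq)]
    · rw [radialProj_smul_of_pos (inv_pos.2 (norm_pos_iff.2 hzq)),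
        radialProj_of_mem_frontier hΩ hΩc hq hz]
  · rintro ⟨w, ⟨hwV, hw1⟩, rfl⟩
    have hw : w ≠ 0 := norm_ne_zero_iff.1 (hw1 ▸ one_ne_zero)
    refine ⟨radialProj_mem_frontier hΩ hΩc hΩb hq hw, ?_⟩
    rw [radialProj, add_sub_cancel_left]
    exact V.smul_mem _ hwV

end RadialProjection

lemma tendsto_hausdorffDist_image_of_continuousOn {X α Y : Type*} [TopologicalSpace X]
    [TopologicalSpace α] [PseudoMetricSpace Y] {f : X → α → Y} {s : Set X} {k : Set α}
    (hk : IsCompact k) (hf : ContinuousOn (Function.uncurry f) (s ×ˢ k)) {x : X} (hx : x ∈ s) :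
    Tendsto (fun y => hausdorffDist (f y '' k) (f x '' k)) (𝓝[s] x) (𝓝 0) := by
  refine Metric.tendsto_nhds.2 fun ε hε => ?_
  obtain ⟨v, hv, hvf⟩ := hk.mem_uniformity_of_prod hf hx (dist_mem_uniformity (half_pos hε))
  filter_upwards [hv] with y hy
  have hle : hausdorffDist (f y '' k) (f x '' k) ≤ ε / 2 := by
    refine hausdorffDist_le_of_mem_dist (half_pos hε).le ?_ ?_
    · rintro _ ⟨a, ha, rfl⟩
      exact ⟨f x a, mem_image_of_mem _ ha, (hvf y hy a ha).le⟩
    · rintro _ ⟨a, ha, rfl⟩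
      exact ⟨f y a, mem_image_of_mem _ ha, by rw [dist_comm]; exact (hvf y hy a ha).le⟩
  rw [Real.dist_0_eq_abs, abs_of_nonneg hausdorffDist_nonneg]
  linarith

theorem hausdorff_convergence_of_graph_slices_general
    (m : ℕ)
    (Ω : Set ((Fin m → ℂ) × ℝ)) (hΩopen : IsOpen Ω)
    (hΩbdd : Bornology.IsBounded Ω) (hΩconv : Convex ℝ Ω)
    (g : (Fin m → ℂ) × ℝ → ℝ) (hg : ContinuousOn g (frontier Ω))
    (a : Fin m → ℂ)
    (W : Set ((Fin m → ℂ) × ℝ))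
    (hW : W = {p : (Fin m → ℂ) × ℝ | ∃ (l : ℂ) (t : ℝ), p = (l • a, t)})
    (S : (Fin m → ℂ) × ℝ → Set ((Fin m → ℂ) × ℂ))
    (hS : ∀ q : (Fin m → ℂ) × ℝ,
      S q = (fun p : (Fin m → ℂ) × ℝ => (p.1, (p.2 : ℂ) + (g p : ℂ) * Complex.I)) ''
        (frontier Ω ∩ (q +ᵥ W)))
    (q : ℕ → (Fin m → ℂ) × ℝ) (hqmem : ∀ j, q j ∈ Ω)
    (qbar : (Fin m → ℂ) × ℝ) (hqbarmem : qbar ∈ Ω)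
    (hq : Filter.Tendsto q Filter.atTop (nhds qbar)) :
    Filter.Tendsto (fun j => Metric.hausdorffDist (S (q j)) (S qbar))
      Filter.atTop (nhds 0) := by
  obtain ⟨V, rfl⟩ : ∃ V : Submodule ℝ ((Fin m → ℂ) × ℝ), (V : Set _) = W :=
    ⟨LinearMap.range ((((LinearMap.id : ℂ →ₗ[ℂ] ℂ).smulRight a).restrictScalars ℝ).prodMap
      LinearMap.id), by ext p; simp [hW, Prod.ext_iff, eq_comm]⟩
  set φ : (Fin m → ℂ) × ℝ → (Fin m → ℂ) × ℂ :=
    fun p => (p.1, (p.2 : ℂ) + (g p : ℂ) * Complex.I)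
  set D := (V : Set ((Fin m → ℂ) × ℝ)) ∩ sphere 0 1
  have hD : IsCompact D := (isCompact_sphere 0 1).inter_left V.closed_of_finiteDimensional
  have hD0 : D ⊆ {0}ᶜ := fun w hw h => by simp_all [D]
  have hSD : ∀ p ∈ Ω, S p = (fun w => φ (radialProj Ω p w)) '' D := fun p hp => by
    rw [hS, frontier_inter_vadd_submodule_eq_image_radialProj hΩopen hΩconv hΩbdd V hp,
      image_image]
  have hφ : ContinuousOn φ (frontier Ω) := by fun_prop
  have hcont : ContinuousOn (Function.uncurry fun p w => φ (radialProj Ω p w)) (Ω ×ˢ D) :=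
    hφ.comp ((continuousOn_radialProj hΩopen hΩconv hΩbdd).mono (prod_mono subset_rfl hD0))
      fun p hp => radialProj_mem_frontier hΩopen hΩconv hΩbdd hp.1 (hD0 hp.2)
  have hq' : Tendsto q atTop (𝓝[Ω] qbar) := tendsto_nhdsWithin_iff.2 ⟨hq, .of_forall hqmem⟩
  refine ((tendsto_hausdorffDist_image_of_continuousOn hD hcont hqbarmem).comp hq').congr
    fun j => ?_
  simp only [Function.comp, hSD _ (hqmem j), hSD _ hqbarmem]

/-- Continuity step of Proposition 3.4: the portions `S_q` of the graph of `g` lying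
over the slices of the boundary of the strictly convex body `Ω` by the translated
subspaces `q + W` converge in the Hausdorff distance as `q_j → q̄` in `Ω`. -/
theorem hausdorff_convergence_of_graph_slices
    (m : ℕ) (hm : 1 ≤ m)
    (Ω : Set ((Fin m → ℂ) × ℝ)) (hΩopen : IsOpen Ω)
    (hΩbdd : Bornology.IsBounded Ω) (hΩconv : Convex ℝ Ω)
    (hΩstrict : StrictConvex ℝ (closure Ω))
    (g : (Fin m → ℂ) × ℝ → ℝ) (hg : ContinuousOn g (frontier Ω))
    (a : Fin m → ℂ) (ha : a ≠ 0)
    (W : Set ((Fin m → ℂ) × ℝ))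
    (hW : W = {p : (Fin m → ℂ) × ℝ | ∃ (l : ℂ) (t : ℝ), p = (l • a, t)})
    (S : (Fin m → ℂ) × ℝ → Set ((Fin m → ℂ) × ℂ))
    (hS : ∀ q : (Fin m → ℂ) × ℝ,
      S q = (fun p : (Fin m → ℂ) × ℝ => (p.1, (p.2 : ℂ) + (g p : ℂ) * Complex.I)) ''
        (frontier Ω ∩ (q +ᵥ W)))
    (q : ℕ → (Fin m → ℂ) × ℝ) (hqmem : ∀ j, q j ∈ Ω)
    (qbar : (Fin m → ℂ) × ℝ) (hqbarmem : qbar ∈ Ω)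
    (hq : Filter.Tendsto q Filter.atTop (nhds qbar)) :
    Filter.Tendsto (fun j => Metric.hausdorffDist (S (q j)) (S qbar))
      Filter.atTop (nhds 0) :=
  hausdorff_convergence_of_graph_slices_general m Ω hΩopen hΩbdd hΩconv g hg a W hW S hS q hqmem
    qbar hqbarmem hq
end
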